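/- Fix maturities 0 ≤ s ≤ S ≤ T_k ≤ T, vectors v_k, u', v' ∈ ℝ^d and z ∈ ℝ. Set A_I := φ_{T−T_k}(v_k) − φ_{T−T_k}(u_k), B_I := ψ_{T−T_k}(v_k) − ψ_{T−T_k}(u_k), A' := φ_{T−S}(v') − φ_{T−S}(u') and B' := ψ_{T−S}(v') − ψ_{T−S}(u'). Assume X has the affine property at ψ_{T−T_k}(u_k) + z B_I and at ψ_{T_k−S}(ψ_{T−T_k}(u_k) + z B_I) − z B', and that (φ, ψ) satisfy the semiflow equations at u_k. Then, Q'-almost surely, E_{Q'}[exp( z(A_I + B_I·X_{T_k} − A' − B'·X_S) ) | ℱ_s] = exp( z A_I − z A' + φ_{T_k−S}(ψ_{T−T_k}(u_k) + z B_I) + φ_{S−s}(ψ_{T_k−S}(ψ_{T−T_k}(u_k) + z B_I) − z B') − φ_{T_k−s}(ψ_{T−T_k}(u_k)) + (ψ_{S−s}(ψ_{T_k−S}(ψ_{T−T_k}(u_k) + z B_I) − z B') − ψ_{T−s}(u_k))·X_s ). -/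

import Mathlib

open MeasureTheory Real Matrix

/-- `X` has the affine property at `u` with exponent functions `φ, ψ`, with respect to the
filtration `ℱ`, the measure `Q` and the horizon `T`. -/
def AffineProperty {Ω : Type*} {m0 : MeasurableSpace Ω} {d : ℕ} (T : ℝ)
    (ℱ : MeasureTheory.Filtration ℝ m0) (Q : Measure Ω) (X : ℝ → Ω → (Fin d → ℝ))
    (φ : ℝ → (Fin d → ℝ) → ℝ) (ψ : ℝ → (Fin d → ℝ) → (Fin d → ℝ))
    (u : Fin d → ℝ) : Prop :=
  ∀ s t : ℝ, 0 ≤ s → s ≤ t → t ≤ T →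
    Integrable (fun ω => exp (u ⬝ᵥ X t ω)) Q ∧
    Q[fun ω => exp (u ⬝ᵥ X t ω)|ℱ s] =ᵐ[Q]
      fun ω => exp (φ (t - s) u + ψ (t - s) u ⬝ᵥ X s ω)

/-- `(φ, ψ)` satisfy the semiflow equations at the vector `v`, up to horizon `T`. -/
def Semiflow {d : ℕ} (T : ℝ) (φ : ℝ → (Fin d → ℝ) → ℝ)
    (ψ : ℝ → (Fin d → ℝ) → (Fin d → ℝ)) (v : Fin d → ℝ) : Prop :=
  (∀ s t : ℝ, 0 ≤ s → 0 ≤ t → t + s ≤ T →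
      φ (t + s) v = φ t v + φ s (ψ t v) ∧ ψ (t + s) v = ψ s (ψ t v)) ∧
    φ 0 v = 0 ∧ ψ 0 v = v

/-- The forward measure `Q'` defined by the density
`dQ'/dQ = exp (φ (T - Tk) uk + ψ (T - Tk) uk ⬝ᵥ X Tk) / exp (φ T uk + ψ T uk ⬝ᵥ x)`. -/
noncomputable def forwardMeasure {Ω : Type*} {m0 : MeasurableSpace Ω} {d : ℕ} (T : ℝ)
    (Q : Measure Ω) (X : ℝ → Ω → (Fin d → ℝ)) (x : Fin d → ℝ)
    (φ : ℝ → (Fin d → ℝ) → ℝ) (ψ : ℝ → (Fin d → ℝ) → (Fin d → ℝ))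
    (Tk : ℝ) (uk : Fin d → ℝ) : Measure Ω :=
  Q.withDensity (fun ω => ENNReal.ofReal
    (exp (φ (T - Tk) uk + ψ (T - Tk) uk ⬝ᵥ X Tk ω) / exp (φ T uk + ψ T uk ⬝ᵥ x)))

/-!
Under `Q'` the density is `D = exp (κ + ψ_{T-Tk}(uk) ⬝ᵥ X_{Tk})`, so Bayes' formula reduces the
claim to the `Q`-conditional expectations of `D` and of `D * exp Y`. Both are exponential-affine:
`D * exp Y = exp (κ' + w ⬝ᵥ X_{Tk} - z B' ⬝ᵥ X_S)` is evaluated by conditioning first on `ℱ_S` and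
then on `ℱ_s`, applying the affine property at each stage, and the semiflow identity
`ψ_{T-s}(uk) = ψ_{Tk-s}(ψ_{T-Tk}(uk))` matches the exponents. Integrability of products such as
`exp (a ⬝ᵥ X_S) * exp (w ⬝ᵥ X_{Tk})` is not assumed; it follows from the integrability of their
conditional versions by truncating the `ℱ_S`-measurable factor and monotone convergence.
-/

section CondExp

variable {Ω : Type*} {m m0 : MeasurableSpace Ω} {μ : Measure Ω}

theorem integrable_mul_of_integrable_mul_condExp (hm : m ≤ m0) [IsFiniteMeasure μ]
    {e g : Ω → ℝ} (he : StronglyMeasurable[m] e) (he0 : 0 ≤ e) (hg : Integrable g μ)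
    (hg0 : 0 ≤ g) (hint : Integrable (e * μ[g|m]) μ) : Integrable (e * g) μ := by
  set trunc : ℕ → Ω → ℝ := fun n ω => min (e ω) n
  have htrunc_sm (n : ℕ) : StronglyMeasurable[m] (trunc n) :=
    (continuous_id.min continuous_const).comp_stronglyMeasurable he
  have htrunc_bdd (n : ℕ) : ∀ᵐ ω ∂μ, ‖trunc n ω‖ ≤ n := .of_forall fun ω => by
    rw [Real.norm_of_nonneg (le_min (he0 ω) n.cast_nonneg)]
    exact min_le_right _ _
  have htrunc_int (n : ℕ) : Integrable (trunc n * g) μ :=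
    hg.bdd_mul ((htrunc_sm n).mono hm).aestronglyMeasurable (htrunc_bdd n)
  have htrunc_le (n : ℕ) : ∫ ω, (trunc n * g) ω ∂μ ≤ ∫ ω, (e * μ[g|m]) ω ∂μ :=
    calc ∫ ω, (trunc n * g) ω ∂μ = ∫ ω, μ[trunc n * g|m] ω ∂μ := (integral_condExp hm).symm
      _ = ∫ ω, (trunc n * μ[g|m]) ω ∂μ :=
        integral_congr_ae (condExp_stronglyMeasurable_mul_of_bound hm (htrunc_sm n) hg n
          (htrunc_bdd n))
      _ ≤ ∫ ω, (e * μ[g|m]) ω ∂μ := by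
        refine integral_mono_ae (integrable_condExp.bdd_mul
          ((htrunc_sm n).mono hm).aestronglyMeasurable (htrunc_bdd n)) hint ?_
        filter_upwards [condExp_nonneg (.of_forall hg0)] with ω hω
        exact mul_le_mul_of_nonneg_right (min_le_left _ _) hω
  have hsup (ω : Ω) : ⨆ n : ℕ, ENNReal.ofReal ((trunc n * g) ω) = ENNReal.ofReal ((e * g) ω) := by
    refine le_antisymm (iSup_le fun n => ENNReal.ofReal_le_ofReal
      (mul_le_mul_of_nonneg_right (min_le_left _ _) (hg0 ω))) ?_
    refine le_iSup_of_le ⌈e ω⌉₊ (le_of_eq ?_)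
    simp only [trunc, Pi.mul_apply, min_eq_left (Nat.le_ceil (e ω))]
  refine ⟨(he.mono hm).aestronglyMeasurable.mul hg.1, ?_⟩
  refine (hasFiniteIntegral_iff_ofReal (.of_forall fun ω => mul_nonneg (he0 ω) (hg0 ω))).2 ?_
  calc ∫⁻ ω, ENNReal.ofReal ((e * g) ω) ∂μ
      = ⨆ n : ℕ, ∫⁻ ω, ENNReal.ofReal ((trunc n * g) ω) ∂μ := by
        simp_rw [← hsup]
        refine lintegral_iSup' (fun n => (htrunc_int n).aemeasurable.ennreal_ofReal)
          (.of_forall fun ω n k hnk => ENNReal.ofReal_le_ofReal ?_)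
        exact mul_le_mul_of_nonneg_right (min_le_min le_rfl (Nat.cast_le.mpr hnk)) (hg0 ω)
    _ ≤ ENNReal.ofReal (∫ ω, (e * μ[g|m]) ω ∂μ) := by
        refine iSup_le fun n => ?_
        rw [← ofReal_integral_eq_lintegral_ofReal (htrunc_int n) (.of_forall fun ω =>
          mul_nonneg (le_min (he0 ω) n.cast_nonneg) (hg0 ω))]
        exact ENNReal.ofReal_le_ofReal (htrunc_le n)
    _ < ⊤ := ENNReal.ofReal_lt_top

theorem integrable_withDensity_ofReal_iff {D Y : Ω → ℝ} (hD : Measurable D) (hD0 : 0 ≤ D) :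
    Integrable Y (μ.withDensity fun ω => ENNReal.ofReal (D ω)) ↔ Integrable (D * Y) μ := by
  rw [integrable_withDensity_iff_integrable_smul' hD.ennreal_ofReal
    (.of_forall fun _ => ENNReal.ofReal_lt_top)]
  simp only [ENNReal.toReal_ofReal (hD0 _), smul_eq_mul]
  rfl

theorem setIntegral_withDensity_ofReal {D Y : Ω → ℝ} (hD : Measurable D) (hD0 : 0 ≤ D)
    {A : Set Ω} (hA : MeasurableSet A) :
    ∫ ω in A, Y ω ∂(μ.withDensity fun ω => ENNReal.ofReal (D ω)) = ∫ ω in A, (D * Y) ω ∂μ := by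
  rw [setIntegral_withDensity_eq_setIntegral_toReal_smul hD.ennreal_ofReal
    (.of_forall fun _ => ENNReal.ofReal_lt_top) _ hA]
  simp only [ENNReal.toReal_ofReal (hD0 _), smul_eq_mul, Pi.mul_apply]

/-- Abstract Bayes formula: `ν[Y|m] = μ[D * Y|m] / μ[D|m]` for `ν = D • μ`, in multiplied-out
form so that no division by `μ[D|m]` occurs. -/
theorem condExp_withDensity_ae_eq (hm : m ≤ m0) [IsFiniteMeasure μ] {D Y g : Ω → ℝ}
    (hD : Measurable D) (hD0 : 0 ≤ D) (hDint : Integrable D μ) (hDY : Integrable (D * Y) μ)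
    (hg : StronglyMeasurable[m] g) (hg0 : 0 ≤ g) (hbayes : g * μ[D|m] =ᵐ[μ] μ[D * Y|m]) :
    (μ.withDensity fun ω => ENNReal.ofReal (D ω))[Y|m]
      =ᵐ[μ.withDensity fun ω => ENNReal.ofReal (D ω)] g := by
  have : IsFiniteMeasure (μ.withDensity fun ω => ENNReal.ofReal (D ω)) :=
    isFiniteMeasure_withDensity_ofReal hDint.2
  have hgD : Integrable (g * D) μ :=
    integrable_mul_of_integrable_mul_condExp hm hg hg0 hDint hD0
      (integrable_condExp.congr hbayes.symm)
  have hDg : Integrable (D * g) μ := by rwa [mul_comm]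
  refine (ae_eq_condExp_of_forall_setIntegral_eq hm
    ((integrable_withDensity_ofReal_iff hD hD0).2 hDY)
    (fun A _ _ => ((integrable_withDensity_ofReal_iff hD hD0).2 hDg).integrableOn)
    (fun A hA _ => ?_) hg.aestronglyMeasurable).symm
  rw [setIntegral_withDensity_ofReal hD hD0 (hm A hA),
    setIntegral_withDensity_ofReal hD hD0 (hm A hA), mul_comm D g]
  calc ∫ ω in A, (g * D) ω ∂μ = ∫ ω in A, μ[g * D|m] ω ∂μ := (setIntegral_condExp hm hgD hA).symm
    _ = ∫ ω in A, μ[D * Y|m] ω ∂μ :=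
      integral_congr_ae (ae_restrict_of_ae
        ((condExp_mul_of_stronglyMeasurable_left hg hgD hDint).trans hbayes))
    _ = ∫ ω in A, (D * Y) ω ∂μ := setIntegral_condExp hm hDY hA

end CondExp

namespace AffineProperty

variable {Ω : Type*} {m0 : MeasurableSpace Ω} {d : ℕ} {T : ℝ} {ℱ : Filtration ℝ m0}
  {Q : Measure Ω} {X : ℝ → Ω → (Fin d → ℝ)} {φ : ℝ → (Fin d → ℝ) → ℝ}
  {ψ : ℝ → (Fin d → ℝ) → (Fin d → ℝ)} {s r t : ℝ}

theorem condExp_exp_const_add {u : Fin d → ℝ} (h : AffineProperty T ℱ Q X φ ψ u) (κ : ℝ)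
    (hs : 0 ≤ s) (hst : s ≤ t) (htT : t ≤ T) :
    Integrable (fun ω => exp (κ + u ⬝ᵥ X t ω)) Q ∧
      Q[fun ω => exp (κ + u ⬝ᵥ X t ω)|ℱ s]
        =ᵐ[Q] fun ω => exp (κ + φ (t - s) u + ψ (t - s) u ⬝ᵥ X s ω) := by
  obtain ⟨hint, hcond⟩ := h s t hs hst htT
  have hfun : (fun ω => exp (κ + u ⬝ᵥ X t ω)) = exp κ • fun ω => exp (u ⬝ᵥ X t ω) := by
    ext ω
    rw [Pi.smul_apply, smul_eq_mul, exp_add]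
  rw [hfun]
  refine ⟨hint.smul _, (condExp_smul _ _ _).trans ?_⟩
  filter_upwards [hcond] with ω hω
  rw [Pi.smul_apply, hω, smul_eq_mul, ← exp_add, add_assoc]

theorem condExp_exp_sub [IsFiniteMeasure Q] {w a : Fin d → ℝ}
    (hw : AffineProperty T ℱ Q X φ ψ w) (hv : AffineProperty T ℱ Q X φ ψ (ψ (t - r) w - a))
    (hXr : Measurable[ℱ r] (X r)) (κ : ℝ) (hs : 0 ≤ s) (hsr : s ≤ r) (hrt : r ≤ t)
    (htT : t ≤ T) :
    Integrable (fun ω => exp (κ + w ⬝ᵥ X t ω - a ⬝ᵥ X r ω)) Q ∧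
      Q[fun ω => exp (κ + w ⬝ᵥ X t ω - a ⬝ᵥ X r ω)|ℱ s] =ᵐ[Q] fun ω =>
        exp (κ + φ (t - r) w + φ (r - s) (ψ (t - r) w - a)
          + ψ (r - s) (ψ (t - r) w - a) ⬝ᵥ X s ω) := by
  set v := ψ (t - r) w - a
  set e : Ω → ℝ := fun ω => exp (κ - a ⬝ᵥ X r ω)
  set g : Ω → ℝ := fun ω => exp (w ⬝ᵥ X t ω)
  obtain ⟨hgint, hgcond⟩ := hw r t (hs.trans hsr) hrt htT
  obtain ⟨hvint, hvcond⟩ := hv.condExp_exp_const_add (κ + φ (t - r) w) hs hsr (hrt.trans htT)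
  have he : StronglyMeasurable[ℱ r] e := by fun_prop
  have hfactor : (fun ω => exp (κ + w ⬝ᵥ X t ω - a ⬝ᵥ X r ω)) = e * g := by
    ext ω
    rw [Pi.mul_apply, ← exp_add]
    ring_nf
  have hpull : e * Q[g|ℱ r] =ᵐ[Q] fun ω => exp (κ + φ (t - r) w + v ⬝ᵥ X r ω) := by
    filter_upwards [hgcond] with ω hω
    rw [Pi.mul_apply, hω, ← exp_add, sub_dotProduct]
    ring_nf
  have hint : Integrable (e * g) Q :=
    integrable_mul_of_integrable_mul_condExp (ℱ.le r) he (fun _ => (exp_pos _).le) hgint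
      (fun _ => (exp_pos _).le) (hvint.congr hpull.symm)
  rw [hfactor]
  refine ⟨hint, ?_⟩
  calc Q[e * g|ℱ s] =ᵐ[Q] Q[Q[e * g|ℱ r]|ℱ s] := (condExp_condExp_of_le (ℱ.mono hsr) (ℱ.le r)).symm
    _ =ᵐ[Q] Q[fun ω => exp (κ + φ (t - r) w + v ⬝ᵥ X r ω)|ℱ s] :=
      condExp_congr_ae ((condExp_mul_of_stronglyMeasurable_left he hint hgint).trans hpull)
    _ =ᵐ[Q] _ := hvcond

end AffineProperty

theorem forwardMeasure_eq_withDensity {Ω : Type*} {m0 : MeasurableSpace Ω} {d : ℕ} (T : ℝ)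
    (Q : Measure Ω) (X : ℝ → Ω → (Fin d → ℝ)) (x : Fin d → ℝ)
    (φ : ℝ → (Fin d → ℝ) → ℝ) (ψ : ℝ → (Fin d → ℝ) → (Fin d → ℝ)) (Tk : ℝ) (uk : Fin d → ℝ) :
    forwardMeasure T Q X x φ ψ Tk uk = Q.withDensity fun ω => ENNReal.ofReal
      (exp (φ (T - Tk) uk - (φ T uk + ψ T uk ⬝ᵥ x) + ψ (T - Tk) uk ⬝ᵥ X Tk ω)) := by
  unfold forwardMeasure
  simp_rw [← exp_sub, sub_add_eq_add_sub]

theorem forward_inflation_mgf_general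
    {Ω : Type*} {m0 : MeasurableSpace Ω} {d : ℕ} (T : ℝ)
    (ℱ : MeasureTheory.Filtration ℝ m0) (Q : Measure Ω) [IsProbabilityMeasure Q]
    (X : ℝ → Ω → (Fin d → ℝ)) (x : Fin d → ℝ)
    (hadapted : ∀ t : ℝ, 0 ≤ t → t ≤ T → Measurable[ℱ t] (X t))
    (φ : ℝ → (Fin d → ℝ) → ℝ) (ψ : ℝ → (Fin d → ℝ) → (Fin d → ℝ))
    (Tk : ℝ) (uk : Fin d → ℝ)
    (haffine_psi : AffineProperty T ℱ Q X φ ψ (ψ (T - Tk) uk))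
    (s S : ℝ) (hs : 0 ≤ s) (hsS : s ≤ S) (hSTk : S ≤ Tk) (hTkT : Tk ≤ T)
    (z : ℝ)
    (AI A' : ℝ) (BI B' : Fin d → ℝ)
    (haffine_z : AffineProperty T ℱ Q X φ ψ (ψ (T - Tk) uk + z • BI))
    (haffine_z' : AffineProperty T ℱ Q X φ ψ
      (ψ (Tk - S) (ψ (T - Tk) uk + z • BI) - z • B'))
    (hsemiflow : Semiflow T φ ψ uk) :
    (forwardMeasure T Q X x φ ψ Tk uk)[fun ω =>
        exp (z * (AI + BI ⬝ᵥ X Tk ω - A' - B' ⬝ᵥ X S ω))|ℱ s]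
      =ᵐ[forwardMeasure T Q X x φ ψ Tk uk]
    fun ω => exp (z * AI - z * A'
        + φ (Tk - S) (ψ (T - Tk) uk + z • BI)
        + φ (S - s) (ψ (Tk - S) (ψ (T - Tk) uk + z • BI) - z • B')
        - φ (Tk - s) (ψ (T - Tk) uk)
        + (ψ (S - s) (ψ (Tk - S) (ψ (T - Tk) uk + z • BI) - z • B') - ψ (T - s) uk)
            ⬝ᵥ X s ω) := by
  have hsTk : s ≤ Tk := hsS.trans hSTk
  have hψ : ψ (T - s) uk = ψ (Tk - s) (ψ (T - Tk) uk) := by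
    simpa using (hsemiflow.1 (Tk - s) (T - Tk) (by linarith) (by linarith) (by linarith)).2
  have hXTk : Measurable (X Tk) := (hadapted Tk (hs.trans hsTk) hTkT).mono (ℱ.le Tk) le_rfl
  have hXs : Measurable[ℱ s] (X s) := hadapted s hs (hsTk.trans hTkT)
  set κ := φ (T - Tk) uk - (φ T uk + ψ T uk ⬝ᵥ x)
  set D : Ω → ℝ := fun ω => exp (κ + ψ (T - Tk) uk ⬝ᵥ X Tk ω)
  obtain ⟨hDint, hDcond⟩ := haffine_psi.condExp_exp_const_add κ hs hsTk hTkT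
  have hDY : (D * fun ω => exp (z * (AI + BI ⬝ᵥ X Tk ω - A' - B' ⬝ᵥ X S ω))) = fun ω =>
      exp (κ + z * AI - z * A' + (ψ (T - Tk) uk + z • BI) ⬝ᵥ X Tk ω - (z • B') ⬝ᵥ X S ω) := by
    ext ω
    rw [Pi.mul_apply, ← exp_add, add_dotProduct, smul_dotProduct, smul_dotProduct, smul_eq_mul,
      smul_eq_mul]
    ring_nf
  obtain ⟨hDYint, hDYcond⟩ := haffine_z.condExp_exp_sub haffine_z'
    (hadapted S (hs.trans hsS) (hSTk.trans hTkT)) (κ + z * AI - z * A') hs hsS hSTk hTkT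
  rw [forwardMeasure_eq_withDensity]
  refine condExp_withDensity_ae_eq (ℱ.le s) (by fun_prop) (fun _ => (exp_pos _).le) hDint
    (hDY ▸ hDYint) (by fun_prop) (fun _ => (exp_pos _).le) ?_
  rw [hDY]
  filter_upwards [hDcond, hDYcond] with ω hDω hDYω
  rw [Pi.mul_apply, hDω, hDYω, ← exp_add, hψ, sub_dotProduct]
  ring_nf

/-- The conditional moment generating function of the log realized inflation
`Y = z * (A_I + B_I ⬝ᵥ X Tk - A' - B' ⬝ᵥ X S)` under the forward measure `Q'`. -/
theorem forward_inflation_mgf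
    {Ω : Type*} {m0 : MeasurableSpace Ω} {d : ℕ} (T : ℝ) (hT : 0 < T)
    (ℱ : MeasureTheory.Filtration ℝ m0) (Q : Measure Ω) [IsProbabilityMeasure Q]
    (X : ℝ → Ω → (Fin d → ℝ)) (x : Fin d → ℝ)
    (hadapted : ∀ t : ℝ, 0 ≤ t → t ≤ T → Measurable[ℱ t] (X t))
    (hX0 : ∀ ω, X 0 ω = x)
    (φ : ℝ → (Fin d → ℝ) → ℝ) (ψ : ℝ → (Fin d → ℝ) → (Fin d → ℝ))
    (Tk : ℝ) (uk : Fin d → ℝ)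
    (haffine_uk : AffineProperty T ℱ Q X φ ψ uk)
    (haffine_psi : AffineProperty T ℱ Q X φ ψ (ψ (T - Tk) uk))
    (s S : ℝ) (hs : 0 ≤ s) (hsS : s ≤ S) (hSTk : S ≤ Tk) (hTkT : Tk ≤ T)
    (vk u' v' : Fin d → ℝ) (z : ℝ)
    (AI A' : ℝ) (BI B' : Fin d → ℝ)
    (hAI : AI = φ (T - Tk) vk - φ (T - Tk) uk)
    (hBI : BI = ψ (T - Tk) vk - ψ (T - Tk) uk)
    (hA' : A' = φ (T - S) v' - φ (T - S) u')
    (hB' : B' = ψ (T - S) v' - ψ (T - S) u')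
    (haffine_z : AffineProperty T ℱ Q X φ ψ (ψ (T - Tk) uk + z • BI))
    (haffine_z' : AffineProperty T ℱ Q X φ ψ
      (ψ (Tk - S) (ψ (T - Tk) uk + z • BI) - z • B'))
    (hsemiflow : Semiflow T φ ψ uk) :
    (forwardMeasure T Q X x φ ψ Tk uk)[fun ω =>
        exp (z * (AI + BI ⬝ᵥ X Tk ω - A' - B' ⬝ᵥ X S ω))|ℱ s]
      =ᵐ[forwardMeasure T Q X x φ ψ Tk uk]
    fun ω => exp (z * AI - z * A'
        + φ (Tk - S) (ψ (T - Tk) uk + z • BI)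
        + φ (S - s) (ψ (Tk - S) (ψ (T - Tk) uk + z • BI) - z • B')
        - φ (Tk - s) (ψ (T - Tk) uk)
        + (ψ (S - s) (ψ (Tk - S) (ψ (T - Tk) uk + z • BI) - z • B') - ψ (T - s) uk)
            ⬝ᵥ X s ω) :=
  forward_inflation_mgf_general T ℱ Q X x hadapted φ ψ Tk uk haffine_psi s S hs hsS hSTk hTkT z AI
    A' BI B' haffine_z haffine_z' hsemiflow
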